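/- arXiv:math/0509410 — 6 statements merged into one kernel-verified Lean document; each statement's English description precedes it below -/
import Mathlib

section
/- If a partial coloring of an n×n square has more than n uncolored entries, then it cannot be uniquely extendable to a Latin square L(n, 2n-1); consequently d(L(n,2n-1)) ≥ n² - n. -/
/-- An `L(n,k)`: an `n × n` array colored with `k` colors such that all entries
in any row and any column have distinct colors. -/
def IsLatin (n k : ℕ) (L : Fin n → Fin n → Fin k) : Prop :=
  (∀ i : Fin n, Function.Injective (L i)) ∧
  (∀ j : Fin n, Function.Injective (fun i => L i j))

/-- `L` extends the partial coloring `P`. -/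
def ExtendsPC {n k : ℕ} (P : Fin n → Fin n → Option (Fin k))
    (L : Fin n → Fin n → Fin k) : Prop :=
  ∀ i j c, P i j = some c → L i j = c

/-- The partial coloring `P` uniquely extends to an `L(n,k)`. -/
def UniquelyExtends (n k : ℕ) (P : Fin n → Fin n → Option (Fin k)) : Prop :=
  ∃! L : Fin n → Fin n → Fin k, IsLatin n k L ∧ ExtendsPC P L

/-- Number of uncolored entries of a partial coloring. -/
def numUncolored {n k : ℕ} (P : Fin n → Fin n → Option (Fin k)) : ℕ :=
  (Finset.univ.filter (fun p : Fin n × Fin n => P p.1 p.2 = none)).card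

/-- Number of colored entries of a partial coloring. -/
def numColored {n k : ℕ} (P : Fin n → Fin n → Option (Fin k)) : ℕ :=
  (Finset.univ.filter (fun p : Fin n × Fin n => P p.1 p.2 ≠ none)).card

/-- The defining number `d(L(n,k))`. -/
noncomputable def definingNumber (n k : ℕ) : ℕ :=
  sInf {m | ∃ P : Fin n → Fin n → Option (Fin k),
    UniquelyExtends n k P ∧ numColored P = m}

/-- The set of available colors for entry `(i,j)`: colors not appearing among
the colored entries of row `i` or column `j`. -/
def availColors {n k : ℕ} (P : Fin n → Fin n → Option (Fin k)) (i j : Fin n) :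
    Finset (Fin k) :=
  Finset.univ.filter (fun c => (∀ w, P i w ≠ some c) ∧ (∀ h, P h j ≠ some c))

/-! If `L` is the unique completion of `P` and `(i, j)` is uncolored, recoloring `(i, j)` by a
color absent from row `i` and column `j` of `L` would give a second completion. So the `n` colors
of row `i` and the `n` colors of column `j` cover all `k ≥ 2n - 1` colors, hence share only
`L i j`. With more than `n` uncolored entries, two of them, `(i, j₁)` and `(i, j₂)`, lie in one
row; then `L i j₂` does not occur in column `j₁` nor `L i j₁` in column `j₂`, and swapping the two
entries gives a second completion. -/

open Function Finset

theorem Function.Injective.update {α β : Type*} [DecidableEq α] {f : α → β}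
    (hf : Injective f) {a : α} {b : β} (hb : ∀ x, x ≠ a → f x ≠ b) :
    Injective (update f a b) := by
  intro x y hxy
  by_cases hx : x = a <;> by_cases hy : y = a
  · rw [hx, hy]
  · subst hx
    rw [update_self, update_of_ne hy] at hxy
    exact absurd hxy.symm (hb y hy)
  · subst hy
    rw [update_self, update_of_ne hx] at hxy
    exact absurd hxy (hb x hx)
  · rw [update_of_ne hx, update_of_ne hy] at hxy
    exact hf hxy

section Latin

variable {n k : ℕ}

theorem IsLatin.update_row {L : Fin n → Fin n → Fin k} (hL : IsLatin n k L) {i : Fin n}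
    {r : Fin n → Fin k} (hr : Injective r) (hcol : ∀ a b, a ≠ i → L a b ≠ r b) :
    IsLatin n k (update L i r) := by
  refine ⟨fun a => ?_, fun b => ?_⟩
  · by_cases ha : a = i
    · subst ha
      simpa using hr
    · simpa [update_of_ne ha] using hL.1 a
  · have hcolumn : (fun a => update L i r a b) = update (fun a => L a b) i (r b) := by
      ext a
      by_cases ha : a = i <;> simp [ha]
    rw [hcolumn]
    exact (hL.2 b).update fun a ha => hcol a b ha

theorem ExtendsPC.update_row {P : Fin n → Fin n → Option (Fin k)} {L : Fin n → Fin n → Fin k}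
    (hext : ExtendsPC P L) {i : Fin n} {r : Fin n → Fin k}
    (hr : ∀ j c, P i j = some c → r j = c) : ExtendsPC P (update L i r) := by
  intro a b c hc
  by_cases ha : a = i
  · subst ha
    simpa using hr b c hc
  · simpa [update_of_ne ha] using hext a b c hc

theorem exists_isLatin (hk : n ≤ k) : ∃ L : Fin n → Fin n → Fin k, IsLatin n k L := by
  rcases n.eq_zero_or_pos with rfl | hn
  · exact ⟨fun i => i.elim0, fun i => i.elim0, fun j => j.elim0⟩
  have : NeZero n := ⟨hn.ne'⟩
  refine ⟨fun i j => Fin.castLE hk (i + j), fun i => ?_, fun j => ?_⟩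
  · exact (Fin.castLE_injective hk).comp (add_right_injective i)
  · exact (Fin.castLE_injective hk).comp (add_left_injective j)

theorem uniquelyExtends_of_isLatin {L : Fin n → Fin n → Fin k} (hL : IsLatin n k L) :
    UniquelyExtends n k fun i j => some (L i j) :=
  ⟨L, ⟨hL, fun _ _ _ h => Option.some_injective _ h⟩,
    fun _ ⟨_, hext⟩ => funext₂ fun i j => hext i j _ rfl⟩

theorem numColored_add_numUncolored (P : Fin n → Fin n → Option (Fin k)) :
    numColored P + numUncolored P = n ^ 2 := by
  rw [numColored, numUncolored, add_comm,
    card_filter_add_card_filter_not (s := univ) fun p : Fin n × Fin n => P p.1 p.2 = none]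
  simp [sq]

theorem exists_two_uncolored_in_row {P : Fin n → Fin n → Option (Fin k)}
    (h : n < numUncolored P) : ∃ i j₁ j₂, j₁ ≠ j₂ ∧ P i j₁ = none ∧ P i j₂ = none := by
  have hlt : #(univ : Finset (Fin n)) < #{p : Fin n × Fin n | P p.1 p.2 = none} := by
    simpa [numUncolored] using h
  obtain ⟨⟨i, j₁⟩, hp, ⟨i', j₂⟩, hq, hne, rfl : i = i'⟩ :=
    exists_ne_map_eq_of_card_lt_of_maps_to hlt (f := Prod.fst) fun _ _ => mem_coe.2 (mem_univ _)
  simp only [mem_filter, mem_univ, true_and] at hp hq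
  exact ⟨i, j₁, j₂, fun h => hne (by rw [h]), hp, hq⟩

end Latin

section UniqueExtension

variable {n k : ℕ} {P : Fin n → Fin n → Option (Fin k)} {L : Fin n → Fin n → Fin k}

theorem row_eq_of_unique_extension (hL : IsLatin n k L) (hext : ExtendsPC P L)
    (huniq : ∀ L', IsLatin n k L' ∧ ExtendsPC P L' → L' = L) {i : Fin n} {r : Fin n → Fin k}
    (hr : Injective r) (hcol : ∀ a b, a ≠ i → L a b ≠ r b)
    (hP : ∀ j c, P i j = some c → r j = c) : r = L i := by
  simpa using congrFun (huniq _ ⟨hL.update_row hr hcol, hext.update_row hP⟩) i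

theorem entry_eq_of_unique_extension (hL : IsLatin n k L) (hext : ExtendsPC P L)
    (huniq : ∀ L', IsLatin n k L' ∧ ExtendsPC P L' → L' = L) {i j : Fin n} (hij : P i j = none)
    {c : Fin k} (hrow : ∀ w, w ≠ j → L i w ≠ c) (hcol : ∀ a, a ≠ i → L a j ≠ c) :
    L i j = c := by
  have h := row_eq_of_unique_extension hL hext huniq (i := i) (r := update (L i) j c)
    ((hL.1 i).update hrow) ?_ ?_
  · simpa using (congrFun h j).symm
  · intro a b ha
    by_cases hb : b = j
    · subst hb
      simpa using hcol a ha
    · rw [update_of_ne hb]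
      exact fun h => ha (hL.2 b h)
  · intro w c' hc'
    have hw : w ≠ j := by
      rintro rfl
      simp [hij] at hc'
    rw [update_of_ne hw]
    exact hext i w c' hc'

theorem eq_of_row_eq_col_of_unique_extension (hk : 2 * n - 1 ≤ k) (hL : IsLatin n k L)
    (hext : ExtendsPC P L) (huniq : ∀ L', IsLatin n k L' ∧ ExtendsPC P L' → L' = L)
    {i j : Fin n} (hij : P i j = none) {a w : Fin n} (h : L a j = L i w) : w = j := by
  set R := univ.image (L i)
  set C := univ.image (fun a => L a j)
  have hcover : R ∪ C = univ := by
    refine eq_univ_of_forall fun c => ?_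
    by_contra hc
    simp only [R, C, mem_union, mem_image, mem_univ, true_and, not_or, not_exists] at hc
    exact hc.1 j (entry_eq_of_unique_extension hL hext huniq hij (fun w _ => hc.1 w)
      (fun a _ => hc.2 a))
  have hinter : #(R ∩ C) ≤ 1 := by
    have hcard := card_union_add_card_inter R C
    rw [hcover, card_univ, Fintype.card_fin, card_image_of_injective _ (hL.1 i),
      card_image_of_injective _ (hL.2 j), card_univ, Fintype.card_fin] at hcard
    have := i.pos
    omega
  have hw : L i w ∈ R ∩ C :=
    mem_inter.2 ⟨mem_image_of_mem _ (mem_univ w), h ▸ mem_image_of_mem _ (mem_univ a)⟩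
  have hj : L i j ∈ R ∩ C :=
    mem_inter.2 ⟨mem_image_of_mem _ (mem_univ j), mem_image_of_mem (fun a => L a j) (mem_univ i)⟩
  exact hL.1 i (card_le_one.1 hinter _ hw _ hj)

theorem not_uniquelyExtends_of_two_uncolored_in_row (hk : 2 * n - 1 ≤ k) {i j₁ j₂ : Fin n}
    (hj : j₁ ≠ j₂) (h₁ : P i j₁ = none) (h₂ : P i j₂ = none) : ¬ UniquelyExtends n k P := by
  rintro ⟨L, ⟨hL, hext⟩, huniq⟩
  have h := row_eq_of_unique_extension hL hext huniq (i := i) (r := L i ∘ Equiv.swap j₁ j₂)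
    ((hL.1 i).comp (Equiv.swap j₁ j₂).injective) ?_ ?_
  · exact hj.symm (by simpa using hL.1 i (congrFun h j₁))
  · intro a b ha hab
    rw [comp_apply] at hab
    rcases eq_or_ne b j₁ with rfl | hb₁
    · rw [Equiv.swap_apply_left] at hab
      exact hj (eq_of_row_eq_col_of_unique_extension hk hL hext huniq h₁ hab).symm
    rcases eq_or_ne b j₂ with rfl | hb₂
    · rw [Equiv.swap_apply_right] at hab
      exact hj (eq_of_row_eq_col_of_unique_extension hk hL hext huniq h₂ hab)
    · rw [Equiv.swap_apply_of_ne_of_ne hb₁ hb₂] at hab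
      exact ha (hL.2 b hab)
  · intro b c hc
    have hb₁ : b ≠ j₁ := by
      rintro rfl
      simp [h₁] at hc
    have hb₂ : b ≠ j₂ := by
      rintro rfl
      simp [h₂] at hc
    simpa [Equiv.swap_apply_of_ne_of_ne hb₁ hb₂] using hext i b c hc

theorem not_uniquelyExtends_of_lt_numUncolored (hk : 2 * n - 1 ≤ k) (h : n < numUncolored P) :
    ¬ UniquelyExtends n k P :=
  let ⟨_, _, _, hj, h₁, h₂⟩ := exists_two_uncolored_in_row h
  not_uniquelyExtends_of_two_uncolored_in_row hk hj h₁ h₂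

end UniqueExtension

theorem more_than_n_uncolored_not_unique (n : ℕ) :
    (∀ P : Fin n → Fin n → Option (Fin (2*n-1)),
      n < numUncolored P → ¬ UniquelyExtends n (2*n-1) P) ∧
    n^2 - n ≤ definingNumber n (2*n-1) := by
  refine ⟨fun P => not_uniquelyExtends_of_lt_numUncolored le_rfl, ?_⟩
  -- a complete Latin square keeps the set nonempty, so `sInf` is not the junk value `0`
  obtain ⟨L, hL⟩ := exists_isLatin (n := n) (k := 2 * n - 1) (by omega)
  refine le_csInf ⟨_, _, uniquelyExtends_of_isLatin hL, rfl⟩ ?_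
  rintro _ ⟨P, hP, rfl⟩
  have hsum := numColored_add_numUncolored P
  have hle : numUncolored P ≤ n :=
    not_lt.1 fun h => not_uniquelyExtends_of_lt_numUncolored le_rfl h hP
  omega
end

section
/- Let n be even. Define a partial coloring of the n×n grid with colors {1,…,2n-1} by: for i ≠ n and i > j, entry (i,j) gets color (i+j) mod (n-1) (taken in {1,…,n-1}); entry (n,i) for 1 ≤ i ≤ n-1 gets color 2i mod (n-1); and whenever (i,j) is colored with color c (for i > j or i = n), entry (j,i) is colored with color c + n. Then for each i, the 2n-2 colored entries in the union of row i and column i use exactly the colors {1,…,2n-1} \ {n}, and the unique extension to L(n, 2n-1) colors every diagonal entry (i,i) with color n. -/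
/-!
The below-diagonal colors are the classical one-factorization of the complete graph `K_n`
on `{1,…,n}`: vertex `n` plays the role of `∞`, two vertices `i, j < n` are joined in color
`i + j mod n - 1`, and `i` is joined to `n` in color `2i mod n - 1`. Since `n - 1` is odd, `2` is
invertible mod `n - 1`, so the `n - 1` edges at each vertex receive distinct, hence all, colors
`1,…,n-1`. Row `i` together with column `i` shows each such edge once with its color `c` and once
with `c + n`, so together they use every color of `{1,…,2n-1}` except `n`. The diagonal entry
`(i,i)` of a Latin extension must avoid all of them, which leaves `n`.
-/

/-- The color (in `{1,…,n-1}`) of the below-diagonal entry `(i,j)` (with `j < i`):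
`(i+j) mod (n-1)` for `i ≠ n`, and `2j mod (n-1)` for `i = n`,
residues taken in `{1,…,n-1}`. -/
def lowColor (n i j : ℕ) : ℕ :=
  if i = n then (2*j - 1) % (n - 1) + 1 else (i + j - 1) % (n - 1) + 1

/-- The partial coloring of Section 2: below the diagonal use `lowColor`;
above the diagonal, entry `(i,j)` gets the color of `(j,i)` shifted by `n`;
the diagonal is uncolored. -/
def constructionPC (n i j : ℕ) : Option ℕ :=
  if j < i then some (lowColor n i j)
  else if i < j then some (lowColor n j i + n)
  else none

/-- A Latin square on the grid `{1,…,n} × {1,…,n}` with colors `{1,…,k}`. -/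
def IsLatinOn (n k : ℕ) (L : ℕ → ℕ → ℕ) : Prop :=
  (∀ i ∈ Finset.Icc 1 n, ∀ j ∈ Finset.Icc 1 n, L i j ∈ Finset.Icc 1 k) ∧
  (∀ i ∈ Finset.Icc 1 n, ∀ j₁ ∈ Finset.Icc 1 n, ∀ j₂ ∈ Finset.Icc 1 n,
    L i j₁ = L i j₂ → j₁ = j₂) ∧
  (∀ j ∈ Finset.Icc 1 n, ∀ i₁ ∈ Finset.Icc 1 n, ∀ i₂ ∈ Finset.Icc 1 n,
    L i₁ j = L i₂ j → i₁ = i₂)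

open Finset

theorem sub_one_mod_add_one_eq_iff_modEq {m a b : ℕ} (ha : 1 ≤ a) (hb : 1 ≤ b) :
    (a - 1) % m + 1 = (b - 1) % m + 1 ↔ a ≡ b [MOD m] := by
  rw [add_left_inj]
  constructor
  · intro h
    have := (show a - 1 ≡ b - 1 [MOD m] from h).add_right 1
    rwa [Nat.sub_add_cancel ha, Nat.sub_add_cancel hb] at this
  · intro h
    refine Nat.ModEq.add_right_cancel' 1 ?_
    rwa [Nat.sub_add_cancel ha, Nat.sub_add_cancel hb]

theorem sub_one_mod_add_one_of_mem_Icc {m a : ℕ} (ha : a ∈ Icc 1 m) : (a - 1) % m + 1 = a := by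
  rw [mem_Icc] at ha
  rw [Nat.mod_eq_of_lt (by omega)]
  omega

theorem eq_of_modEq_of_mem_Icc {m a b : ℕ} (h : a ≡ b [MOD m]) (ha : a ∈ Icc 1 m)
    (hb : b ∈ Icc 1 m) : a = b := by
  rw [← sub_one_mod_add_one_of_mem_Icc ha, ← sub_one_mod_add_one_of_mem_Icc hb,
    sub_one_mod_add_one_eq_iff_modEq (mem_Icc.1 ha).1 (mem_Icc.1 hb).1]
  exact h

/-- The color of the edge `{i, j}` of `K_n`, read off below the diagonal. -/
def edgeColor (n i j : ℕ) : ℕ := lowColor n (max i j) (min i j)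

theorem edgeColor_comm (n i j : ℕ) : edgeColor n i j = edgeColor n j i := by
  rw [edgeColor, edgeColor, max_comm, min_comm]

theorem edgeColor_of_ne {n i j : ℕ} (hi : i ≠ n) (hj : j ≠ n) :
    edgeColor n i j = (i + j - 1) % (n - 1) + 1 := by
  have hmax : max i j ≠ n := by rcases max_choice i j with h | h <;> rw [h] <;> assumption
  rw [edgeColor, lowColor, if_neg hmax, add_comm (max i j), min_add_max]

theorem edgeColor_last {n j : ℕ} (hj : j ≤ n) : edgeColor n n j = (2 * j - 1) % (n - 1) + 1 := by
  rw [edgeColor, lowColor, max_eq_left hj, min_eq_right hj, if_pos rfl]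

theorem edgeColor_mem_Icc {n : ℕ} (hn : 1 < n) (i j : ℕ) : edgeColor n i j ∈ Icc 1 (n - 1) := by
  rw [edgeColor, lowColor, mem_Icc]
  split_ifs
  · have := Nat.mod_lt (2 * min i j - 1) (show 0 < n - 1 by omega); omega
  · have := Nat.mod_lt (max i j + min i j - 1) (show 0 < n - 1 by omega); omega

section OneFactorization

variable {n i : ℕ}

theorem edgeColor_injOn_of_ne_last (hi : i ∈ Icc 1 (n - 1)) :
    Set.InjOn (edgeColor n i) (Icc 1 (n - 1)) := by
  intro x hx y hy hxy
  rw [mem_coe, mem_Icc] at hx hy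
  rw [mem_Icc] at hi
  rw [edgeColor_of_ne (by omega) (by omega), edgeColor_of_ne (by omega) (by omega),
    sub_one_mod_add_one_eq_iff_modEq (by omega) (by omega)] at hxy
  exact eq_of_modEq_of_mem_Icc (hxy.add_left_cancel' i) (mem_Icc.2 hx) (mem_Icc.2 hy)

theorem edgeColor_last_ne (hi : i ∈ Icc 1 (n - 1)) {y : ℕ} (hy : y ∈ Icc 1 (n - 1))
    (hyi : y ≠ i) : edgeColor n i n ≠ edgeColor n i y := by
  rw [mem_Icc] at hi hy
  intro h
  rw [edgeColor_comm, edgeColor_last (by omega), edgeColor_of_ne (by omega) (by omega),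
    sub_one_mod_add_one_eq_iff_modEq (by omega) (by omega), two_mul] at h
  exact hyi (eq_of_modEq_of_mem_Icc (h.add_left_cancel' i).symm (mem_Icc.2 hy) (mem_Icc.2 hi))

theorem edgeColor_last_injOn (hn : Even n) : Set.InjOn (edgeColor n n) (Icc 1 (n - 1)) := by
  intro x hx y hy hxy
  rw [mem_coe, mem_Icc] at hx hy
  rw [edgeColor_last (by omega), edgeColor_last (by omega),
    sub_one_mod_add_one_eq_iff_modEq (by omega) (by omega)] at hxy
  have hodd : Nat.Coprime 2 (n - 1) :=
    Nat.coprime_two_left.2 (Nat.Even.sub_odd (by omega) hn odd_one)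
  exact eq_of_modEq_of_mem_Icc (Nat.ModEq.cancel_left_of_coprime hodd.symm hxy)
    (mem_Icc.2 hx) (mem_Icc.2 hy)

theorem edgeColor_injOn (hn : Even n) (hi : i ∈ Icc 1 n) :
    Set.InjOn (edgeColor n i) ((Icc 1 n).erase i) := by
  have hsub : ∀ {x}, x ∈ Icc 1 n → x ≠ n → x ∈ Icc 1 (n - 1) := by
    intro x hx hxn
    rw [mem_Icc] at hx ⊢
    omega
  intro x hx y hy hxy
  rw [mem_coe] at hx hy
  have hxi := ne_of_mem_erase hx
  have hyi := ne_of_mem_erase hy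
  replace hx := mem_of_mem_erase hx
  replace hy := mem_of_mem_erase hy
  rcases eq_or_ne i n with hin | hin
  · subst i
    exact edgeColor_last_injOn hn (hsub hx hxi) (hsub hy hyi) hxy
  have hi' : i ∈ Icc 1 (n - 1) := hsub hi hin
  rcases eq_or_ne x n with hxn | hxn <;> rcases eq_or_ne y n with hyn | hyn
  · rw [hxn, hyn]
  · subst x
    exact absurd hxy (edgeColor_last_ne hi' (hsub hy hyn) hyi)
  · subst y
    exact absurd hxy.symm (edgeColor_last_ne hi' (hsub hx hxn) hxi)
  · exact edgeColor_injOn_of_ne_last hi' (hsub hx hxn) (hsub hy hyn) hxy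

theorem image_edgeColor (hn : Even n) (hi : i ∈ Icc 1 n) :
    ((Icc 1 n).erase i).image (edgeColor n i) = Icc 1 (n - 1) := by
  have hn1 : 1 < n := by obtain ⟨r, hr⟩ := hn; rw [mem_Icc] at hi; omega
  refine eq_of_subset_of_card_le ?_ ?_
  · exact image_subset_iff.2 fun j _ => edgeColor_mem_Icc hn1 i j
  · rw [card_image_of_injOn (edgeColor_injOn hn hi), card_erase_of_mem hi, Nat.card_Icc,
      Nat.card_Icc]
    omega

end OneFactorization

theorem constructionPC_of_lt {n i j : ℕ} (h : j < i) :
    constructionPC n i j = some (edgeColor n i j) := by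
  rw [constructionPC, if_pos h, edgeColor, max_eq_left h.le, min_eq_right h.le]

theorem constructionPC_of_gt {n i j : ℕ} (h : i < j) :
    constructionPC n i j = some (edgeColor n i j + n) := by
  rw [constructionPC, if_neg h.not_gt, if_pos h, edgeColor, max_eq_right h.le, min_eq_left h.le]

theorem constructionPC_ne_none {n i j : ℕ} (h : i ≠ j) : constructionPC n i j ≠ none := by
  rcases h.lt_or_gt with h | h
  · simp [constructionPC_of_gt h]
  · simp [constructionPC_of_lt h]

theorem image_union_image_eq_of_pairing {α : Type*} {s : Finset α} {f g h : α → ℕ} {d : ℕ}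
    (hpair : ∀ x ∈ s, (g x = f x ∧ h x = f x + d) ∨ (g x = f x + d ∧ h x = f x)) :
    s.image g ∪ s.image h = s.image f ∪ (s.image f).image (· + d) := by
  ext c
  simp only [mem_union, mem_image, exists_exists_and_eq_and]
  constructor
  · rintro (⟨x, hx, rfl⟩ | ⟨x, hx, rfl⟩) <;> rcases hpair x hx with ⟨hg, hh⟩ | ⟨hg, hh⟩ <;>
      simp only [hg, hh] <;> first | exact Or.inl ⟨x, hx, rfl⟩ | exact Or.inr ⟨x, hx, rfl⟩
  · rintro (⟨x, hx, rfl⟩ | ⟨x, hx, rfl⟩) <;> rcases hpair x hx with ⟨hg, hh⟩ | ⟨hg, hh⟩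
    · exact Or.inl ⟨x, hx, hg⟩
    · exact Or.inr ⟨x, hx, hh⟩
    · exact Or.inr ⟨x, hx, hh⟩
    · exact Or.inl ⟨x, hx, hg⟩

theorem constructionPC_rowCol_colors {n i : ℕ} (hn : Even n) (hi : i ∈ Icc 1 n) :
    (((Icc 1 n).erase i).image (fun w => (constructionPC n i w).getD 0)) ∪
      (((Icc 1 n).erase i).image (fun h => (constructionPC n h i).getD 0)) =
      (Icc 1 (2 * n - 1)).erase n := by
  have hpair : ∀ x ∈ (Icc 1 n).erase i,
      ((constructionPC n i x).getD 0 = edgeColor n i x ∧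
        (constructionPC n x i).getD 0 = edgeColor n i x + n) ∨
      ((constructionPC n i x).getD 0 = edgeColor n i x + n ∧
        (constructionPC n x i).getD 0 = edgeColor n i x) := by
    intro x hx
    rcases (ne_of_mem_erase hx).lt_or_gt with h | h
    · left
      rw [constructionPC_of_lt h, constructionPC_of_gt h, edgeColor_comm n x]
      exact ⟨rfl, rfl⟩
    · right
      rw [constructionPC_of_gt h, constructionPC_of_lt h, edgeColor_comm n x]
      exact ⟨rfl, rfl⟩
  rw [image_union_image_eq_of_pairing hpair, image_edgeColor hn hi, image_add_right_Icc]
  ext c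
  simp only [mem_union, mem_Icc, mem_erase]
  omega

theorem IsLatinOn.diag_notMem_image_union {n k : ℕ} {L : ℕ → ℕ → ℕ} (hL : IsLatinOn n k L)
    {i : ℕ} (hi : i ∈ Icc 1 n) :
    L i i ∉ ((Icc 1 n).erase i).image (L i) ∪ ((Icc 1 n).erase i).image (fun h => L h i) := by
  simp only [mem_union, mem_image, mem_erase, not_or, not_exists, not_and, and_imp]
  exact ⟨fun j hji hj hL' => hji (hL.2.1 i hi j hj i hi hL'),
    fun j hji hj hL' => hji (hL.2.2 i hi j hj i hi hL')⟩

theorem apply_eq_getD_of_agree {n : ℕ} {L : ℕ → ℕ → ℕ}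
    (hagree : ∀ i j c, constructionPC n i j = some c → L i j = c) {i j : ℕ} (h : i ≠ j) :
    L i j = (constructionPC n i j).getD 0 := by
  obtain ⟨c, hc⟩ := Option.ne_none_iff_exists'.1 (constructionPC_ne_none (n := n) h)
  rw [hc, hagree i j c hc, Option.getD_some]

theorem construction_covers_all_but_n (n : ℕ) (hn : Even n) :
    (∀ i ∈ Finset.Icc 1 n,
      (((Finset.Icc 1 n).erase i).image (fun w => (constructionPC n i w).getD 0)) ∪
      (((Finset.Icc 1 n).erase i).image (fun h => (constructionPC n h i).getD 0)) =
        (Finset.Icc 1 (2*n - 1)).erase n) ∧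
    (∀ L : ℕ → ℕ → ℕ, IsLatinOn n (2*n - 1) L →
      (∀ i j c, constructionPC n i j = some c → L i j = c) →
      ∀ i ∈ Finset.Icc 1 n, L i i = n) := by
  refine ⟨fun i hi => constructionPC_rowCol_colors hn hi, fun L hL hagree i hi => ?_⟩
  have hcolor := hL.1 i hi i hi
  have hfree := hL.diag_notMem_image_union hi
  rw [image_congr fun w hw => apply_eq_getD_of_agree hagree (ne_of_mem_erase hw).symm,
    image_congr fun h hh => apply_eq_getD_of_agree hagree (ne_of_mem_erase hh),
    constructionPC_rowCol_colors hn hi] at hfree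
  simp only [mem_erase, mem_Icc, not_and] at hfree hcolor
  omega
end

section
/- If a partial coloring of an n×n square uniquely extends to L(n, 2n-2), then there do not exist rows i₁ ≠ i₂ and columns j₁ ≠ j₂ such that all four entries (i₁,j₁), (i₁,j₂), (i₂,j₁), (i₂,j₂) are uncolored. -/
/-!
Let `L` be the unique completion. At an uncolored cell `(i, j)` every color occurs in row `i` or
column `j` of `L`, since otherwise that cell alone could be recolored; with `2n - 2` colors, row `i`
and column `j` therefore share at most two colors. Hence at each corner of an uncolored rectangle
the color of one of its two neighbouring corners could be placed once the rectangle is cleared: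
otherwise these two colors and its own would be three colors shared by its row and column. A
`2 × 2` array in which every cell may take a neighbour's color has a second proper coloring (a
swap along a side or a rotation), and this gives a second completion.
-/

open Function Finset

theorem Function.Injective.of_eqOn_compl {ι κ : Type*} {f g : ι → κ} (hf : Injective f)
    {s : Set ι} (hfg : ∀ x ∉ s, g x = f x) (hs : Set.InjOn g s)
    (hfree : ∀ x ∈ s, ∀ y ∉ s, f y ≠ g x) : Injective g := by
  rw [← Set.injOn_univ, ← Set.union_compl_self s, Set.injOn_union disjoint_compl_right]
  refine ⟨hs, fun x hx y hy h => hf ?_, fun x hx y hy h => hfree x hx y hy ?_⟩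
  · rwa [← hfg x hx, ← hfg y hy]
  · rw [← hfg y hy, h]

variable {n k : ℕ} {P : Fin n → Fin n → Option (Fin k)} {L : Fin n → Fin n → Fin k}

/-- `e` may be placed at `(x, y)` when the block `I × J` of `L` is recolored. -/
def FreeAt (L : Fin n → Fin n → Fin k) (I J : Set (Fin n)) (x y : Fin n) (e : Fin k) : Prop :=
  (∀ y' ∉ J, L x y' ≠ e) ∧ ∀ x' ∉ I, L x' y ≠ e

theorem IsLatin.freeAt_self (hL : IsLatin n k L) {I J : Set (Fin n)} {x y : Fin n}
    (hx : x ∈ I) (hy : y ∈ J) : FreeAt L I J x y (L x y) :=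
  ⟨fun _ hy' h => hy' (hL.1 x h ▸ hy), fun _ hx' h => hx' (hL.2 y h ▸ hx)⟩

theorem IsLatin.of_eq_off_block (hL : IsLatin n k L) {M : Fin n → Fin n → Fin k}
    {I J : Set (Fin n)} (hoff : ∀ x y, (x ∈ I → y ∉ J) → M x y = L x y)
    (hrow : ∀ x ∈ I, Set.InjOn (M x) J) (hcol : ∀ y ∈ J, Set.InjOn (fun x => M x y) I)
    (hfree : ∀ x ∈ I, ∀ y ∈ J, FreeAt L I J x y (M x y)) : IsLatin n k M := by
  constructor
  · intro x
    by_cases hx : x ∈ I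
    · exact (hL.1 x).of_eqOn_compl (fun y hy => hoff x y fun _ => hy) (hrow x hx)
        fun y hy y' hy' => (hfree x hx y hy).1 y' hy'
    · rw [show M x = L x from funext fun y => hoff x y fun h => absurd h hx]
      exact hL.1 x
  · intro y
    by_cases hy : y ∈ J
    · exact (hL.2 y).of_eqOn_compl (fun x hx => hoff x y fun h => absurd h hx) (hcol y hy)
        fun x hx x' hx' => (hfree x hx y hy).2 x' hx'
    · rw [show (fun x => M x y) = (fun x => L x y) from funext fun x => hoff x y fun _ => hy]
      exact hL.2 y

theorem eq_of_eq_off_uncolored_block (hL : ∀ M, IsLatin n k M ∧ ExtendsPC P M ↔ M = L)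
    {M : Fin n → Fin n → Fin k} {I J : Set (Fin n)}
    (hP : ∀ x ∈ I, ∀ y ∈ J, P x y = none) (hoff : ∀ x y, (x ∈ I → y ∉ J) → M x y = L x y)
    (hrow : ∀ x ∈ I, Set.InjOn (M x) J) (hcol : ∀ y ∈ J, Set.InjOn (fun x => M x y) I)
    (hfree : ∀ x ∈ I, ∀ y ∈ J, FreeAt L I J x y (M x y)) : M = L := by
  obtain ⟨hLat, hPL⟩ := (hL L).2 rfl
  refine (hL M).1 ⟨hLat.of_eq_off_block hoff hrow hcol hfree, fun x y e hxy => ?_⟩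
  rw [hoff x y fun hx hy => by simp [hP x hx y hy] at hxy]
  exact hPL x y e hxy

theorem exists_eq_row_or_col (hL : ∀ M, IsLatin n k M ∧ ExtendsPC P M ↔ M = L)
    {i j : Fin n} (hij : P i j = none) (e : Fin k) :
    (∃ y, L i y = e) ∨ ∃ x, L x j = e := by
  by_contra! ⟨hrow, hcol⟩
  let M : Fin n → Fin n → Fin k := fun x y => if x = i ∧ y = j then e else L x y
  have hM : M = L := eq_of_eq_off_uncolored_block hL (I := {i}) (J := {j})
    (by simpa using hij) (fun x y h => if_neg fun ⟨hx, hy⟩ => h hx hy)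
    (fun x _ => Set.injOn_singleton _ _) (fun y _ => Set.injOn_singleton _ _)
    (by rintro x rfl y rfl; simpa [M, FreeAt] using ⟨fun y _ => hrow y, fun x _ => hcol x⟩)
  have he : e = L i j := by simpa [M] using congrFun₂ hM i j
  exact hrow j he.symm

theorem card_rowColors_inter_colColors_le_two
    (hL : ∀ M, IsLatin n k M ∧ ExtendsPC P M ↔ M = L) (hk : 2 * n - 2 ≤ k) {i j : Fin n}
    (hij : P i j = none) : #(univ.image (L i) ∩ univ.image (fun x => L x j)) ≤ 2 := by
  have hLat := ((hL L).2 rfl).1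
  have hunion : univ.image (L i) ∪ univ.image (fun x => L x j) = univ :=
    eq_univ_of_forall fun e => by
      rcases exists_eq_row_or_col hL hij e with ⟨y, rfl⟩ | ⟨x, rfl⟩ <;> simp
  have := card_union_add_card_inter (univ.image (L i)) (univ.image (fun x => L x j))
  rw [hunion, card_image_of_injective _ (hLat.1 i), card_image_of_injective _ (hLat.2 j)] at this
  simp only [card_univ, Fintype.card_fin] at this
  omega

theorem freeAt_or_freeAt (hL : ∀ M, IsLatin n k M ∧ ExtendsPC P M ↔ M = L)
    (hk : 2 * n - 2 ≤ k) {i i' j j' : Fin n} (hi : i ≠ i') (hj : j ≠ j') (hij : P i j = none)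
    {I J : Set (Fin n)} (hi' : i' ∈ I) (hj' : j' ∈ J) :
    FreeAt L I J i j (L i j') ∨ FreeAt L I J i j (L i' j) := by
  have hLat := ((hL L).2 rfl).1
  rw [FreeAt, FreeAt, and_iff_right fun y hy h => hy (hLat.1 i h ▸ hj'),
    and_iff_left fun x hx h => hx (hLat.2 j h ▸ hi')]
  by_contra! ⟨⟨x, hx, hxb⟩, y, hy, hyc⟩
  -- otherwise `L i j`, `L i j'` and `L i' j` would be three colors shared by row `i` and column `j`
  refine (card_rowColors_inter_colColors_le_two hL hk hij).not_gt <| two_lt_card_iff.2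
    ⟨L i j, L i j', L i' j, ?_, ?_, ?_, fun h => hj (hLat.1 i h), fun h => hi (hLat.2 j h),
      fun h => hx (hLat.2 j (hxb.trans h) ▸ hi')⟩
  · simp
  · simpa using ⟨x, hxb⟩
  · simpa using ⟨y, hyc⟩

section TwoByTwo

variable {α : Type*} {a b c d : α} {A B C D : α → Prop}

theorem exists_ne_two_by_two_of_distinct (hab : a ≠ b) (hcd : c ≠ d) (hac : a ≠ c)
    (hbd : b ≠ d) (hbc : b ≠ c) (had : a ≠ d) (ha : A a) (hb : B b) (hc : C c) (hd : D d)
    (hAb : A b) (hB : B a ∨ B d) (hC : C a ∨ C d) (hD : D b ∨ D c) :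
    ∃ a' b' c' d', A a' ∧ B b' ∧ C c' ∧ D d' ∧ a' ≠ b' ∧ c' ≠ d' ∧ a' ≠ c' ∧ b' ≠ d' ∧
      (a', b', c', d') ≠ (a, b, c, d) := by
  rcases hB with hBa | hBd
  · exact ⟨b, a, c, d, hAb, hBa, hc, hd, hab.symm, hcd, hbc, had, by simp [hab.symm]⟩
  rcases hD with hDb | hDc
  · exact ⟨a, d, c, b, ha, hBd, hc, hDb, had, hbc.symm, hac, hbd.symm, by simp [hbd.symm]⟩
  rcases hC with hCa | hCd
  · exact ⟨b, d, a, c, hAb, hBd, hCa, hDc, hbd, hac, hab.symm, hcd.symm, by simp [hab.symm]⟩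
  · exact ⟨a, b, d, c, ha, hb, hCd, hDc, hab, hcd.symm, had, hbc, by simp [hcd.symm]⟩

/-- Read `a b / c d` as a `2 × 2` array with proper rows and columns, and `A`, `B`, `C`, `D` as
the colors allowed in its cells. -/
theorem exists_ne_two_by_two (hab : a ≠ b) (hcd : c ≠ d) (hac : a ≠ c) (hbd : b ≠ d)
    (ha : A a) (hb : B b) (hc : C c) (hd : D d)
    (hA : A b ∨ A c) (hB : B a ∨ B d) (hC : C a ∨ C d) (hD : D b ∨ D c) :
    ∃ a' b' c' d', A a' ∧ B b' ∧ C c' ∧ D d' ∧ a' ≠ b' ∧ c' ≠ d' ∧ a' ≠ c' ∧ b' ≠ d' ∧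
      (a', b', c', d') ≠ (a, b, c, d) := by
  by_cases hbc : b = c
  · subst hbc
    obtain ⟨b', hb', hb'b⟩ : ∃ b', B b' ∧ b' ≠ b := hB.elim (⟨a, ·, hab⟩) (⟨d, ·, hbd.symm⟩)
    obtain ⟨c', hc', hc'b⟩ : ∃ c', C c' ∧ c' ≠ b := hC.elim (⟨a, ·, hac⟩) (⟨d, ·, hcd.symm⟩)
    exact ⟨b, b', c', b, hA.elim id id, hb', hc', hD.elim id id, hb'b.symm, hc'b, hc'b.symm,
      hb'b, by simp [hab.symm]⟩
  by_cases had : a = d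
  · subst had
    obtain ⟨a', ha', ha'a⟩ : ∃ a', A a' ∧ a' ≠ a := hA.elim (⟨b, ·, hab.symm⟩) (⟨c, ·, hac.symm⟩)
    obtain ⟨d', hd', hd'a⟩ : ∃ d', D d' ∧ d' ≠ a := hD.elim (⟨b, ·, hbd⟩) (⟨c, ·, hcd⟩)
    exact ⟨a', a, a, d', ha', hB.elim id id, hC.elim id id, hd', ha'a, hd'a.symm, ha'a,
      hd'a.symm, by simp [ha'a]⟩
  rcases hA with hAb | hAc
  · exact exists_ne_two_by_two_of_distinct hab hcd hac hbd hbc had ha hb hc hd hAb hB hC hD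
  · obtain ⟨a', c', b', d', ha', hc', hb', hd', hac', hbd', hab', hcd', hne⟩ :=
      exists_ne_two_by_two_of_distinct hac hbd hab hcd (Ne.symm hbc) had ha hc hb hd
        hAc hC hB hD.symm
    exact ⟨a', b', c', d', ha', hb', hc', hd', hab', hcd', hac', hbd', fun h => hne (by
      simp only [Prod.mk.injEq] at h ⊢; tauto)⟩

end TwoByTwo

theorem eq_of_rectangle_trade (hL : ∀ M, IsLatin n k M ∧ ExtendsPC P M ↔ M = L)
    {i₁ i₂ j₁ j₂ : Fin n} (hi : i₁ ≠ i₂) (hj : j₁ ≠ j₂) (h₁₁ : P i₁ j₁ = none)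
    (h₁₂ : P i₁ j₂ = none) (h₂₁ : P i₂ j₁ = none) (h₂₂ : P i₂ j₂ = none) {a b c d : Fin k}
    (ha : FreeAt L {i₁, i₂} {j₁, j₂} i₁ j₁ a) (hb : FreeAt L {i₁, i₂} {j₁, j₂} i₁ j₂ b)
    (hc : FreeAt L {i₁, i₂} {j₁, j₂} i₂ j₁ c) (hd : FreeAt L {i₁, i₂} {j₁, j₂} i₂ j₂ d)
    (hab : a ≠ b) (hcd : c ≠ d) (hac : a ≠ c) (hbd : b ≠ d) :
    (a, b, c, d) = (L i₁ j₁, L i₁ j₂, L i₂ j₁, L i₂ j₂) := by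
  let M : Fin n → Fin n → Fin k := fun x y =>
    if x = i₁ then (if y = j₁ then a else if y = j₂ then b else L x y)
    else if x = i₂ then (if y = j₁ then c else if y = j₂ then d else L x y) else L x y
  have hM : M = L := by
    refine eq_of_eq_off_uncolored_block hL (I := {i₁, i₂}) (J := {j₁, j₂}) ?_ ?_ ?_ ?_ ?_
    · rintro x (rfl | rfl) y (rfl | rfl) <;> assumption
    · intro x y h
      simp only [Set.mem_insert_iff, Set.mem_singleton_iff] at h
      grind
    · rintro x (rfl | rfl) <;> simp [M, hj.symm, hi.symm, hab, hcd]
    · rintro y (rfl | rfl) <;> simp [M, hj.symm, hi.symm, hac, hbd]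
    · rintro x (rfl | rfl) y (rfl | rfl) <;> simpa [M, hi.symm, hj.symm]
  rw [← hM]
  simp [M, hi.symm, hj.symm]

theorem no_uncolored_rectangle (n : ℕ)
    (P : Fin n → Fin n → Option (Fin (2*n-2)))
    (h : UniquelyExtends n (2*n-2) P) :
    ¬ ∃ (i₁ i₂ j₁ j₂ : Fin n), i₁ ≠ i₂ ∧ j₁ ≠ j₂ ∧
      P i₁ j₁ = none ∧ P i₁ j₂ = none ∧ P i₂ j₁ = none ∧ P i₂ j₂ = none := by
  rintro ⟨i₁, i₂, j₁, j₂, hi, hj, h₁₁, h₁₂, h₂₁, h₂₂⟩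
  obtain ⟨L, hLP, hU⟩ := h
  have hL : ∀ M, IsLatin n (2*n-2) M ∧ ExtendsPC P M ↔ M = L := fun M => ⟨hU M, (· ▸ hLP)⟩
  have hLat := hLP.1
  obtain ⟨a, b, c, d, ha, hb, hc, hd, hab, hcd, hac, hbd, hne⟩ := exists_ne_two_by_two
    (A := FreeAt L {i₁, i₂} {j₁, j₂} i₁ j₁) (B := FreeAt L {i₁, i₂} {j₁, j₂} i₁ j₂)
    (C := FreeAt L {i₁, i₂} {j₁, j₂} i₂ j₁) (D := FreeAt L {i₁, i₂} {j₁, j₂} i₂ j₂)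
    ((hLat.1 i₁).ne hj) ((hLat.1 i₂).ne hj) ((hLat.2 j₁).ne hi) ((hLat.2 j₂).ne hi)
    (hLat.freeAt_self (by simp) (by simp)) (hLat.freeAt_self (by simp) (by simp))
    (hLat.freeAt_self (by simp) (by simp)) (hLat.freeAt_self (by simp) (by simp))
    (freeAt_or_freeAt hL le_rfl hi hj h₁₁ (by simp) (by simp))
    (freeAt_or_freeAt hL le_rfl hi hj.symm h₁₂ (by simp) (by simp))
    (freeAt_or_freeAt hL le_rfl hi.symm hj h₂₁ (by simp) (by simp)).symm
    (freeAt_or_freeAt hL le_rfl hi.symm hj.symm h₂₂ (by simp) (by simp)).symm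
  exact hne (eq_of_rectangle_trade hL hi hj h₁₁ h₁₂ h₂₁ h₂₂ ha hb hc hd hab hcd hac hbd)
end

section
/- Suppose a partial coloring of an n×n square with 2n-2 colors has exactly four uncolored entries at positions (1,1), (1,2), (2,1), (2,2), and that each of these entries has at least two available colors. Then the partial coloring does not uniquely extend to L(n, 2n-2). -/
private lemma inj_update2 {α β : Type*} [DecidableEq α] (f : α → β)
    (hf : Function.Injective f) (p q : α) (_hpq : p ≠ q) (x y : β) (hxy : x ≠ y)
    (hx : ∀ z, z ≠ p → z ≠ q → x ≠ f z)
    (hy : ∀ z, z ≠ p → z ≠ q → y ≠ f z) :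
    Function.Injective (fun z => if z = p then x else if z = q then y else f z) := by
  intro z1 z2 h
  dsimp only at h
  by_cases h1 : z1 = p
  · rw [if_pos h1] at h
    by_cases h2 : z2 = p
    · rw [h1, h2]
    · rw [if_neg h2] at h
      by_cases h4 : z2 = q
      · rw [if_pos h4] at h; exact absurd h hxy
      · rw [if_neg h4] at h; exact absurd h (hx z2 h2 h4)
  · rw [if_neg h1] at h
    by_cases h3 : z1 = q
    · rw [if_pos h3] at h
      by_cases h2 : z2 = p
      · rw [if_pos h2] at h; exact absurd h hxy.symm
      · rw [if_neg h2] at h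
        by_cases h4 : z2 = q
        · rw [h3, h4]
        · rw [if_neg h4] at h; exact absurd h (hy z2 h2 h4)
    · rw [if_neg h3] at h
      by_cases h2 : z2 = p
      · rw [if_pos h2] at h; exact absurd h.symm (hx z1 h1 h3)
      · rw [if_neg h2] at h
        by_cases h4 : z2 = q
        · rw [if_pos h4] at h; exact absurd h.symm (hy z1 h1 h3)
        · rw [if_neg h4] at h; exact hf h


theorem four_uncolored_block_not_unique (n : ℕ) (hn : 2 ≤ n)
    (P : Fin n → Fin n → Option (Fin (2*n-2)))
    (hunc : ∀ i j : Fin n, P i j = none ↔ ((i : ℕ) ≤ 1 ∧ (j : ℕ) ≤ 1))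
    (havail : ∀ i j : Fin n, (i : ℕ) ≤ 1 → (j : ℕ) ≤ 1 →
      2 ≤ (availColors P i j).card) :
    ¬ UniquelyExtends n (2*n-2) P := by
  intro hU
  obtain ⟨L, ⟨hLat, hExt⟩, huniq⟩ := hU
  have hn0 : 0 < n := by omega
  have hn1 : 1 < n := by omega
  set i0 : Fin n := ⟨0, hn0⟩ with hi0
  set i1 : Fin n := ⟨1, hn1⟩ with hi1
  have h01 : i0 ≠ i1 := by simp [hi0, hi1, Fin.ext_iff]
  have hi0v : (i0 : ℕ) = 0 := rfl
  have hi1v : (i1 : ℕ) = 1 := rfl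
  have hsmall : ∀ z : Fin n, (z : ℕ) ≤ 1 ↔ (z = i0 ∨ z = i1) := by
    intro z
    constructor
    · intro hz
      rcases Nat.le_one_iff_eq_zero_or_eq_one.mp hz with h | h
      · exact Or.inl (Fin.ext h)
      · exact Or.inr (Fin.ext h)
    · rintro (rfl | rfl) <;> simp [hi0v, hi1v]
  have hnone : ∀ i j : Fin n, (i = i0 ∨ i = i1) → (j = i0 ∨ j = i1) → P i j = none := by
    intro i j hi hj
    exact (hunc i j).mpr ⟨(hsmall i).mpr hi, (hsmall j).mpr hj⟩
  have hcolored : ∀ i j : Fin n, ¬((i = i0 ∨ i = i1) ∧ (j = i0 ∨ j = i1)) →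
      P i j = some (L i j) := by
    intro i j hij
    have hne : P i j ≠ none := by
      intro h
      obtain ⟨h1, h2⟩ := (hunc i j).mp h
      exact hij ⟨(hsmall i).mp h1, (hsmall j).mp h2⟩
    obtain ⟨v, hv⟩ := Option.ne_none_iff_exists'.mp hne
    rw [hv, hExt i j v hv]
  have hmemA : ∀ i j : Fin n, P i j = none → L i j ∈ availColors P i j := by
    intro i j hij
    simp only [availColors, Finset.mem_filter, Finset.mem_univ, true_and]
    constructor
    · intro w hw
      have h1 : L i w = L i j := hExt i w _ hw
      have h2 : w = j := hLat.1 i h1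
      rw [h2, hij] at hw
      exact nomatch hw
    · intro z hw
      have h1 : L z j = L i j := hExt z j _ hw
      have h2 : z = i := hLat.2 j h1
      rw [h2, hij] at hw
      exact nomatch hw
  have hRowNe : ∀ (i j : Fin n) (x : Fin (2*n-2)), x ∈ availColors P i j →
      ∀ z, z ≠ i0 → z ≠ i1 → x ≠ L i z := by
    intro i j x hx z hz1 hz2 hxz
    have h1 := hcolored i z (fun hh => hh.2.elim hz1 hz2)
    rw [← hxz] at h1
    exact (Finset.mem_filter.mp hx).2.1 z h1
  have hColNe : ∀ (i j : Fin n) (x : Fin (2*n-2)), x ∈ availColors P i j →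
      ∀ z, z ≠ i0 → z ≠ i1 → x ≠ L z j := by
    intro i j x hx z hz1 hz2 hxz
    have h1 := hcolored z j (fun hh => hh.1.elim hz1 hz2)
    rw [← hxz] at h1
    exact (Finset.mem_filter.mp hx).2.2 z h1
  set a := L i0 i0 with hadef
  set b := L i0 i1 with hbdef
  set c := L i1 i0 with hcdef
  set d := L i1 i1 with hddef
  have hab : a ≠ b := fun h => h01 (hLat.1 i0 h)
  have hac : a ≠ c := fun h => h01 (hLat.2 i0 h)
  have hdb : d ≠ b := fun h => h01.symm (hLat.2 i1 h)
  have hdc : d ≠ c := fun h => h01.symm (hLat.1 i1 h)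
  have ha : a ∈ availColors P i0 i0 := hmemA i0 i0 (hnone _ _ (Or.inl rfl) (Or.inl rfl))
  have hb : b ∈ availColors P i0 i1 := hmemA i0 i1 (hnone _ _ (Or.inl rfl) (Or.inr rfl))
  have hc : c ∈ availColors P i1 i0 := hmemA i1 i0 (hnone _ _ (Or.inr rfl) (Or.inl rfl))
  have hd : d ∈ availColors P i1 i1 := hmemA i1 i1 (hnone _ _ (Or.inr rfl) (Or.inr rfl))
  have key : ∀ x00 x01 x10 x11 : Fin (2*n-2),
      x00 ∈ availColors P i0 i0 → x01 ∈ availColors P i0 i1 →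
      x10 ∈ availColors P i1 i0 → x11 ∈ availColors P i1 i1 →
      x00 ≠ x01 → x00 ≠ x10 → x11 ≠ x01 → x11 ≠ x10 →
      x00 = a ∧ x01 = b ∧ x10 = c ∧ x11 = d := by
    intro x00 x01 x10 x11 m00 m01 m10 m11 e1 e2 e3 e4
    set L' : Fin n → Fin n → Fin (2*n-2) := fun i j =>
      if i = i0 then (if j = i0 then x00 else if j = i1 then x01 else L i j)
      else if i = i1 then (if j = i0 then x10 else if j = i1 then x11 else L i j)
      else L i j with hL'
    have e00 : L' i0 i0 = x00 := by simp [hL']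
    have e01 : L' i0 i1 = x01 := by simp [hL', h01.symm]
    have e10 : L' i1 i0 = x10 := by simp [hL', h01.symm]
    have e11 : L' i1 i1 = x11 := by simp [hL', h01.symm]
    have ext' : ExtendsPC P L' := by
      intro i j cc hcc
      have hib : ¬((i = i0 ∨ i = i1) ∧ (j = i0 ∨ j = i1)) := by
        intro hij
        rw [hnone i j hij.1 hij.2] at hcc
        exact nomatch hcc
      have hLij : L i j = cc := hExt i j cc hcc
      rw [← hLij]
      by_cases hii0 : i = i0
      · have hj : ¬(j = i0 ∨ j = i1) := fun hh => hib ⟨Or.inl hii0, hh⟩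
        push_neg at hj
        simp [hL', hii0, hj.1, hj.2]
      · by_cases hii1 : i = i1
        · have hj : ¬(j = i0 ∨ j = i1) := fun hh => hib ⟨Or.inr hii1, hh⟩
          push_neg at hj
          simp [hL', hii0, hii1, hj.1, hj.2]
        · simp [hL', hii0, hii1]
    have lat' : IsLatin n (2*n-2) L' := by
      constructor
      · intro i
        by_cases hii0 : i = i0
        · have hfun : L' i = fun j => if j = i0 then x00 else if j = i1 then x01 else L i0 j := by
            funext j; simp [hL', hii0]
          rw [hfun]
          exact inj_update2 _ (hLat.1 i0) i0 i1 h01 _ _ e1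
            (hRowNe i0 i0 x00 m00) (hRowNe i0 i1 x01 m01)
        · by_cases hii1 : i = i1
          · have hfun : L' i = fun j => if j = i0 then x10 else if j = i1 then x11 else L i1 j := by
              funext j; simp [hL', hii0, hii1, h01.symm]
            rw [hfun]
            exact inj_update2 _ (hLat.1 i1) i0 i1 h01 _ _ e4.symm
              (hRowNe i1 i0 x10 m10) (hRowNe i1 i1 x11 m11)
          · have hfun : L' i = L i := by
              funext j; simp [hL', hii0, hii1]
            rw [hfun]
            exact hLat.1 i
      · intro j
        by_cases hjj0 : j = i0
        · have hfun : (fun i => L' i j) = fun i => if i = i0 then x00 else if i = i1 then x10 else L i i0 := by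
            funext i
            by_cases h1 : i = i0 <;> by_cases h2 : i = i1 <;> simp [hL', h1, h2, hjj0]
          rw [hfun]
          exact inj_update2 _ (hLat.2 i0) i0 i1 h01 _ _ e2
            (hColNe i0 i0 x00 m00) (hColNe i1 i0 x10 m10)
        · by_cases hjj1 : j = i1
          · have hfun : (fun i => L' i j) = fun i => if i = i0 then x01 else if i = i1 then x11 else L i i1 := by
              funext i
              by_cases h1 : i = i0 <;> by_cases h2 : i = i1 <;> simp [hL', h1, h2, hjj0, hjj1, h01.symm]
            rw [hfun]
            exact inj_update2 _ (hLat.2 i1) i0 i1 h01 _ _ e3.symm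
              (hColNe i0 i1 x01 m01) (hColNe i1 i1 x11 m11)
          · have hfun : (fun i => L' i j) = fun i => L i j := by
              funext i
              by_cases h1 : i = i0 <;> by_cases h2 : i = i1 <;> simp [hL', h1, h2, hjj0, hjj1]
            rw [hfun]
            exact hLat.2 j
    have hLL : L' = L := huniq L' ⟨lat', ext'⟩
    rw [hLL] at e00 e01 e10 e11
    exact ⟨e00.symm, e01.symm, e10.symm, e11.symm⟩
  have hle0 : (i0 : ℕ) ≤ 1 := by omega
  have hle1 : (i1 : ℕ) ≤ 1 := by omega
  have hca := havail i0 i0 hle0 hle0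
  have hcb := havail i0 i1 hle0 hle1
  have hcc := havail i1 i0 hle1 hle0
  have hcd := havail i1 i1 hle1 hle1
  obtain ⟨a', ha'mem, ha'ne⟩ := Finset.exists_mem_ne (lt_of_lt_of_le one_lt_two hca) a
  obtain ⟨b', hb'mem, hb'ne⟩ := Finset.exists_mem_ne (lt_of_lt_of_le one_lt_two hcb) b
  obtain ⟨c', hc'mem, hc'ne⟩ := Finset.exists_mem_ne (lt_of_lt_of_le one_lt_two hcc) c
  obtain ⟨d', hd'mem, hd'ne⟩ := Finset.exists_mem_ne (lt_of_lt_of_le one_lt_two hcd) d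
  by_cases hA : a' ≠ b ∧ a' ≠ c
  · exact ha'ne (key a' b c d ha'mem hb hc hd hA.1 hA.2 hdb hdc).1
  by_cases hB : b' ≠ a ∧ b' ≠ d
  · exact hb'ne (key a b' c d ha hb'mem hc hd (fun h => hB.1 h.symm) hac
      (fun h => hB.2 h.symm) hdc).2.1
  by_cases hC : c' ≠ a ∧ c' ≠ d
  · exact hc'ne (key a b c' d ha hb hc'mem hd hab (fun h => hC.1 h.symm) hdb
      (fun h => hC.2 h.symm)).2.2.1
  by_cases hD : d' ≠ b ∧ d' ≠ c
  · exact hd'ne (key a b c d' ha hb hc hd'mem hab hac hD.1 hD.2).2.2.2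
  have hA' : a' = b ∨ a' = c := (not_and_or.mp hA).imp not_not.mp not_not.mp
  have hB' : b' = a ∨ b' = d := (not_and_or.mp hB).imp not_not.mp not_not.mp
  have hC' : c' = a ∨ c' = d := (not_and_or.mp hC).imp not_not.mp not_not.mp
  have hD' : d' = b ∨ d' = c := (not_and_or.mp hD).imp not_not.mp not_not.mp
  have h1 : a' ≠ b' := by
    rcases hA' with h | h <;> rcases hB' with h' | h' <;> rw [h, h'] <;>
      first | exact hab.symm | exact hac.symm | exact hdb.symm | exact hdc.symm
  have h2 : a' ≠ c' := by
    rcases hA' with h | h <;> rcases hC' with h' | h' <;> rw [h, h'] <;>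
      first | exact hab.symm | exact hac.symm | exact hdb.symm | exact hdc.symm
  have h3 : d' ≠ b' := by
    rcases hD' with h | h <;> rcases hB' with h' | h' <;> rw [h, h'] <;>
      first | exact hab.symm | exact hac.symm | exact hdb.symm | exact hdc.symm
  have h4 : d' ≠ c' := by
    rcases hD' with h | h <;> rcases hC' with h' | h' <;> rw [h, h'] <;>
      first | exact hab.symm | exact hac.symm | exact hdb.symm | exact hdc.symm
  exact ha'ne (key a' b' c' d' ha'mem hb'mem hc'mem hd'mem h1 h2 h3 h4).1
end

section
/- If a partial coloring of an n×n square uniquely extends to L(n, 2n-2), then there is no pair (k,l) such that the uncolored entry (k+1,l+1) has exactly one available color a, entry (k+1,l+2) has available colors exactly {a,b}, entry (k+2,l+2) has available colors exactly {b,c}, and entry (k+2,l+3) is uncolored, where a, b, c are distinct. -/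
lemma aux_card_le {n k : ℕ} (f : Fin n → Option (Fin k)) (s : Finset (Fin n))
    (hs : ∀ w, w ∉ s → f w = none) :
    (Finset.univ.filter (fun c : Fin k => ∃ w, f w = some c)).card ≤ s.card := by
  classical
  have h1 : (Finset.univ.filter (fun c : Fin k => ∃ w, f w = some c)).image some ⊆ s.image f := by
    intro o ho
    simp only [Finset.mem_image, Finset.mem_filter, Finset.mem_univ, true_and] at ho ⊢
    obtain ⟨c, ⟨w, hw⟩, rfl⟩ := ho
    refine ⟨w, ?_, hw⟩
    by_contra hmem
    rw [hs w hmem] at hw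
    exact Option.some_ne_none c hw.symm
  calc (Finset.univ.filter (fun c : Fin k => ∃ w, f w = some c)).card
      = ((Finset.univ.filter (fun c : Fin k => ∃ w, f w = some c)).image some).card :=
        (Finset.card_image_of_injective _ (Option.some_injective _)).symm
    _ ≤ (s.image f).card := Finset.card_le_card h1
    _ ≤ s.card := Finset.card_image_le

theorem lemma3_configuration_impossible (n : ℕ)
    (P : Fin n → Fin n → Option (Fin (2*n-2)))
    (h : UniquelyExtends n (2*n-2) P) :
    ¬ ∃ (i₁ i₂ j₁ j₂ j₃ : Fin n) (a b c : Fin (2*n-2)),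
      (i₂ : ℕ) = (i₁ : ℕ) + 1 ∧ (j₂ : ℕ) = (j₁ : ℕ) + 1 ∧
      (j₃ : ℕ) = (j₂ : ℕ) + 1 ∧
      a ≠ b ∧ b ≠ c ∧ a ≠ c ∧
      P i₁ j₁ = none ∧ P i₁ j₂ = none ∧ P i₂ j₂ = none ∧ P i₂ j₃ = none ∧
      availColors P i₁ j₁ = {a} ∧
      availColors P i₁ j₂ = {a, b} ∧
      availColors P i₂ j₂ = {b, c} := by
  classical
  rintro ⟨i₁, i₂, j₁, j₂, j₃, a, b, c, hi, hj2, hj3, hab, hbc, hac,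
    hP11, hP12, hP22, hP23, hA1, hA2, hA3⟩
  -- basic distinctness
  have hj12 : j₁ ≠ j₂ := Fin.ne_of_val_ne (by omega)
  have hj13 : j₁ ≠ j₃ := Fin.ne_of_val_ne (by omega)
  have hj23 : j₂ ≠ j₃ := Fin.ne_of_val_ne (by omega)
  have hn : 3 ≤ n := by have := j₃.isLt; omega
  -- color sets
  set R1 := Finset.univ.filter (fun c : Fin (2*n-2) => ∃ w, P i₁ w = some c) with hR1
  set R2 := Finset.univ.filter (fun c : Fin (2*n-2) => ∃ w, P i₂ w = some c) with hR2
  set C1 := Finset.univ.filter (fun c : Fin (2*n-2) => ∃ h, P h j₁ = some c) with hC1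
  set C2 := Finset.univ.filter (fun c : Fin (2*n-2) => ∃ h, P h j₂ = some c) with hC2
  have havail : ∀ i j, availColors P i j = Finset.univ \
      ((Finset.univ.filter (fun c : Fin (2*n-2) => ∃ w, P i w = some c)) ∪
       (Finset.univ.filter (fun c : Fin (2*n-2) => ∃ h, P h j = some c))) := by
    intro i j
    ext x
    simp only [availColors, Finset.mem_filter, Finset.mem_univ, true_and,
      Finset.mem_sdiff, Finset.mem_union, not_or, not_exists]
  -- cardinality of avail = (2n-2) - card (R ∪ C)
  have hcardav : ∀ i j, (availColors P i j).card = 2*n-2 -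
      ((Finset.univ.filter (fun c : Fin (2*n-2) => ∃ w, P i w = some c)) ∪
       (Finset.univ.filter (fun c : Fin (2*n-2) => ∃ h, P h j = some c))).card := by
    intro i j
    rw [havail, Finset.card_sdiff_of_subset (Finset.subset_univ _), Finset.card_univ,
      Fintype.card_fin]
  have e1 : 2*n-2 - (R1 ∪ C1).card = 1 := by
    have h' := hcardav i₁ j₁
    rw [hA1, Finset.card_singleton] at h'
    exact h'.symm
  have e2 : 2*n-2 - (R1 ∪ C2).card = 2 := by
    have := hcardav i₁ j₂; rw [hA2] at this
    rw [Finset.card_insert_of_notMem (by simp [hab]), Finset.card_singleton] at this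
    exact this.symm
  have e3 : 2*n-2 - (R2 ∪ C2).card = 2 := by
    have := hcardav i₂ j₂; rw [hA3] at this
    rw [Finset.card_insert_of_notMem (by simp [hbc]), Finset.card_singleton] at this
    exact this.symm
  have le1 : (R1 ∪ C1).card ≤ 2*n-2 := by
    simpa using Finset.card_le_univ (R1 ∪ C1)
  have le2 : (R1 ∪ C2).card ≤ 2*n-2 := by
    simpa using Finset.card_le_univ (R1 ∪ C2)
  have le3 : (R2 ∪ C2).card ≤ 2*n-2 := by
    simpa using Finset.card_le_univ (R2 ∪ C2)
  -- upper bounds on individual sets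
  have hR1le : R1.card ≤ n - 2 := by
    have := aux_card_le (P i₁) (Finset.univ \ {j₁, j₂}) (by
      intro w hw
      simp only [Finset.mem_sdiff, Finset.mem_univ, true_and, not_not,
        Finset.mem_insert, Finset.mem_singleton] at hw
      rcases hw with rfl | rfl
      · exact hP11
      · exact hP12)
    rw [Finset.card_sdiff_of_subset (Finset.subset_univ _), Finset.card_univ, Fintype.card_fin,
      Finset.card_pair hj12] at this
    exact this
  have hC1le : C1.card ≤ n - 1 := by
    have := aux_card_le (fun h => P h j₁) (Finset.univ \ {i₁}) (by
      intro w hw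
      simp only [Finset.mem_sdiff, Finset.mem_univ, true_and, not_not,
        Finset.mem_singleton] at hw
      subst hw; exact hP11)
    rw [Finset.card_sdiff_of_subset (Finset.subset_univ _), Finset.card_univ, Fintype.card_fin,
      Finset.card_singleton] at this
    exact this
  have hi12 : i₁ ≠ i₂ := Fin.ne_of_val_ne (by omega)
  have hC2le : C2.card ≤ n - 2 := by
    have := aux_card_le (fun h => P h j₂) (Finset.univ \ {i₁, i₂}) (by
      intro w hw
      simp only [Finset.mem_sdiff, Finset.mem_univ, true_and, not_not,
        Finset.mem_insert, Finset.mem_singleton] at hw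
      rcases hw with rfl | rfl
      · exact hP12
      · exact hP22)
    rw [Finset.card_sdiff_of_subset (Finset.subset_univ _), Finset.card_univ, Fintype.card_fin,
      Finset.card_pair hi12] at this
    exact this
  have hR2le : R2.card ≤ n - 2 := by
    have := aux_card_le (P i₂) (Finset.univ \ {j₂, j₃}) (by
      intro w hw
      simp only [Finset.mem_sdiff, Finset.mem_univ, true_and, not_not,
        Finset.mem_insert, Finset.mem_singleton] at hw
      rcases hw with rfl | rfl
      · exact hP22
      · exact hP23)
    rw [Finset.card_sdiff_of_subset (Finset.subset_univ _), Finset.card_univ, Fintype.card_fin,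
      Finset.card_pair hj23] at this
    exact this
  have hu1 : (R1 ∪ C1).card ≤ R1.card + C1.card := Finset.card_union_le _ _
  have hu3 : (R2 ∪ C2).card ≤ R2.card + C2.card := Finset.card_union_le _ _
  have hint1 : (R1 ∪ C1).card + (R1 ∩ C1).card = R1.card + C1.card :=
    Finset.card_union_add_card_inter _ _
  have hint3 : (R2 ∪ C2).card + (R2 ∩ C2).card = R2.card + C2.card :=
    Finset.card_union_add_card_inter _ _
  have hu2 : (R1 ∪ C2).card ≤ R1.card + C2.card := Finset.card_union_le _ _
  -- derive: R1 ∩ C1 = ∅, R2 ∩ C2 = ∅, R2.card ≥ n-2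
  have hd1 : (R1 ∩ C1).card = 0 := by omega
  have hd3 : (R2 ∩ C2).card = 0 := by omega
  have hR2ge : n - 2 ≤ R2.card := by omega
  -- cell (i₂, j₁) is colored
  have hx : ∃ x, P i₂ j₁ = some x := by
    by_contra hno
    push_neg at hno
    have hnone : P i₂ j₁ = none := by
      cases hpc : P i₂ j₁ with
      | none => rfl
      | some x => exact absurd hpc (hno x)
    have := aux_card_le (P i₂) (Finset.univ \ {j₁, j₂, j₃}) (by
      intro w hw
      simp only [Finset.mem_sdiff, Finset.mem_univ, true_and, not_not,
        Finset.mem_insert, Finset.mem_singleton] at hw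
      rcases hw with rfl | rfl | rfl
      · exact hnone
      · exact hP22
      · exact hP23)
    rw [Finset.card_sdiff_of_subset (Finset.subset_univ _), Finset.card_univ, Fintype.card_fin] at this
    have hc3 : ({j₁, j₂, j₃} : Finset (Fin n)).card = 3 := by
      rw [Finset.card_insert_of_notMem (by simp [hj12, hj13]),
        Finset.card_pair hj23]
    rw [hc3] at this
    have : R2.card ≤ n - 3 := this
    omega
  obtain ⟨x, hxeq⟩ := hx
  -- x ∈ R2 and x ∈ C1
  have hxR2 : x ∈ R2 := by
    rw [hR2]; simp only [Finset.mem_filter, Finset.mem_univ, true_and]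
    exact ⟨j₁, hxeq⟩
  have hxC1 : x ∈ C1 := by
    rw [hC1]; simp only [Finset.mem_filter, Finset.mem_univ, true_and]
    exact ⟨i₂, hxeq⟩
  -- x ∉ C2
  have hxnC2 : x ∉ C2 := by
    intro hxC2
    have : x ∈ R2 ∩ C2 := Finset.mem_inter.mpr ⟨hxR2, hxC2⟩
    rw [Finset.card_eq_zero.mp hd3] at this
    exact absurd this (Finset.notMem_empty x)
  -- x ∉ R1
  have hxnR1 : x ∉ R1 := by
    intro hxR1
    have : x ∈ R1 ∩ C1 := Finset.mem_inter.mpr ⟨hxR1, hxC1⟩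
    rw [Finset.card_eq_zero.mp hd1] at this
    exact absurd this (Finset.notMem_empty x)
  -- hence x ∈ availColors P i₁ j₂ = {a, b}
  have hxav : x ∈ availColors P i₁ j₂ := by
    rw [havail i₁ j₂]
    simp only [Finset.mem_sdiff, Finset.mem_univ, true_and, Finset.mem_union, not_or]
    exact ⟨fun hm => hxnR1 hm, fun hm => hxnC2 hm⟩
  rw [hA2] at hxav
  simp only [Finset.mem_insert, Finset.mem_singleton] at hxav
  -- x ≠ a since a ∈ availColors P i₁ j₁ means a not in column j₁
  have hana : a ∈ availColors P i₁ j₁ := by rw [hA1]; simp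
  simp only [availColors, Finset.mem_filter, Finset.mem_univ, true_and] at hana
  have hxa : x ≠ a := by
    intro h'; subst h'
    exact hana.2 i₂ hxeq
  have hxb : x = b := hxav.resolve_left hxa
  -- but b ∈ availColors P i₂ j₂ means b not in row i₂
  have hbav : b ∈ availColors P i₂ j₂ := by rw [hA3]; simp
  simp only [availColors, Finset.mem_filter, Finset.mem_univ, true_and] at hbav
  exact hbav.1 j₁ (hxb ▸ hxeq)
end

section
/- The partial coloring of the 5×5 square with 8 colors given by rows [·,·,7,8,4], [3,·,·,1,8], [2,6,5,7,·], [5,7,6,·,·], [6,5,2,·,3] (where · denotes uncolored) uniquely extends to L(5,8), the unique completion being rows [1,3,7,8,4], [3,2,4,1,8], [2,6,5,7,1], [5,7,6,3,2], [6,5,2,4,3]. -/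
/-- An `L(n,k)` with colors taken from `{1,…,k} ⊆ ℕ`. -/
def IsLatinNat (n k : ℕ) (L : Fin n → Fin n → ℕ) : Prop :=
  (∀ i j, L i j ∈ Finset.Icc 1 k) ∧
  (∀ i : Fin n, Function.Injective (L i)) ∧
  (∀ j : Fin n, Function.Injective (fun i => L i j))

/-- The partial coloring of the 5×5 square from Section 5. -/
def P5 : Fin 5 → Fin 5 → Option ℕ := fun i j =>
  (!![none,   none,   some 7, some 8, some 4;
      some 3, none,   none,   some 1, some 8;
      some 2, some 6, some 5, some 7, none;
      some 5, some 7, some 6, none,   none;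
      some 6, some 5, some 2, none,   some 3] :
    Matrix (Fin 5) (Fin 5) (Option ℕ)) i j

theorem five_by_five_uniquely_extends :
    ∀ L : Fin 5 → Fin 5 → ℕ,
      (IsLatinNat 5 8 L ∧ ∀ i j c, P5 i j = some c → L i j = c) ↔
      L = fun i j =>
        (!![1,3,7,8,4;
            3,2,4,1,8;
            2,6,5,7,1;
            5,7,6,3,2;
            6,5,2,4,3] : Matrix (Fin 5) (Fin 5) ℕ) i j := by
  intro L
  constructor
  · rintro ⟨⟨hIcc, hrow, hcol⟩, hP⟩
    have rne : ∀ (i j j' : Fin 5), j ≠ j' → L i j ≠ L i j' := by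
      intro i j j' hjj' h
      exact hjj' (hrow i h)
    have cne : ∀ (i i' j : Fin 5), i ≠ i' → L i j ≠ L i' j := by
      intro i i' j hii' h
      exact hii' (hcol j h)
    -- known entries
    have k02 : L 0 2 = 7 := hP 0 2 7 rfl
    have k03 : L 0 3 = 8 := hP 0 3 8 rfl
    have k04 : L 0 4 = 4 := hP 0 4 4 rfl
    have k10 : L 1 0 = 3 := hP 1 0 3 rfl
    have k13 : L 1 3 = 1 := hP 1 3 1 rfl
    have k14 : L 1 4 = 8 := hP 1 4 8 rfl
    have k20 : L 2 0 = 2 := hP 2 0 2 rfl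
    have k21 : L 2 1 = 6 := hP 2 1 6 rfl
    have k22 : L 2 2 = 5 := hP 2 2 5 rfl
    have k23 : L 2 3 = 7 := hP 2 3 7 rfl
    have k30 : L 3 0 = 5 := hP 3 0 5 rfl
    have k31 : L 3 1 = 7 := hP 3 1 7 rfl
    have k32 : L 3 2 = 6 := hP 3 2 6 rfl
    have k40 : L 4 0 = 6 := hP 4 0 6 rfl
    have k41 : L 4 1 = 5 := hP 4 1 5 rfl
    have k42 : L 4 2 = 2 := hP 4 2 2 rfl
    have k44 : L 4 4 = 3 := hP 4 4 3 rfl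
    -- bounds on unknowns
    have B : ∀ i j, 1 ≤ L i j ∧ L i j ≤ 8 := fun i j =>
      Finset.mem_Icc.mp (hIcc i j)
    -- a = L 0 0 = 1
    have k00 : L 0 0 = 1 := by
      have := B 0 0
      have h1 := rne 0 0 2 (by decide); have h2 := rne 0 0 3 (by decide)
      have h3 := rne 0 0 4 (by decide)
      have h4 := cne 0 1 0 (by decide); have h5 := cne 0 2 0 (by decide)
      have h6 := cne 0 3 0 (by decide); have h7 := cne 0 4 0 (by decide)
      omega
    -- d = L 1 2 = 4
    have k12 : L 1 2 = 4 := by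
      have := B 1 2
      have h1 := rne 1 2 0 (by decide); have h2 := rne 1 2 3 (by decide)
      have h3 := rne 1 2 4 (by decide)
      have h4 := cne 1 0 2 (by decide); have h5 := cne 1 2 2 (by decide)
      have h6 := cne 1 3 2 (by decide); have h7 := cne 1 4 2 (by decide)
      omega
    -- c = L 1 1 = 2
    have k11 : L 1 1 = 2 := by
      have := B 1 1
      have h1 := rne 1 1 0 (by decide); have h2 := rne 1 1 2 (by decide)
      have h3 := rne 1 1 3 (by decide); have h4 := rne 1 1 4 (by decide)
      have h5 := cne 1 2 1 (by decide); have h6 := cne 1 3 1 (by decide)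
      have h7 := cne 1 4 1 (by decide)
      omega
    -- b = L 0 1 = 3
    have k01 : L 0 1 = 3 := by
      have := B 0 1
      have h1 := rne 0 1 0 (by decide); have h2 := rne 0 1 2 (by decide)
      have h3 := rne 0 1 3 (by decide); have h4 := rne 0 1 4 (by decide)
      have h5 := cne 0 1 1 (by decide); have h6 := cne 0 2 1 (by decide)
      have h7 := cne 0 3 1 (by decide); have h8 := cne 0 4 1 (by decide)
      omega
    -- e = L 2 4 = 1
    have k24 : L 2 4 = 1 := by
      have := B 2 4
      have h1 := rne 2 4 0 (by decide); have h2 := rne 2 4 1 (by decide)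
      have h3 := rne 2 4 2 (by decide); have h4 := rne 2 4 3 (by decide)
      have h5 := cne 2 0 4 (by decide); have h6 := cne 2 1 4 (by decide)
      have h7 := cne 2 4 4 (by decide)
      omega
    -- g = L 3 4 = 2
    have k34 : L 3 4 = 2 := by
      have := B 3 4
      have h1 := rne 3 4 0 (by decide); have h2 := rne 3 4 1 (by decide)
      have h3 := rne 3 4 2 (by decide)
      have h4 := cne 3 0 4 (by decide); have h5 := cne 3 1 4 (by decide)
      have h6 := cne 3 2 4 (by decide); have h7 := cne 3 4 4 (by decide)
      omega
    -- h = L 4 3 = 4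
    have k43 : L 4 3 = 4 := by
      have := B 4 3
      have h1 := rne 4 3 0 (by decide); have h2 := rne 4 3 1 (by decide)
      have h3 := rne 4 3 2 (by decide); have h4 := rne 4 3 4 (by decide)
      have h5 := cne 4 0 3 (by decide); have h6 := cne 4 1 3 (by decide)
      have h7 := cne 4 2 3 (by decide)
      omega
    -- f = L 3 3 = 3
    have k33 : L 3 3 = 3 := by
      have := B 3 3
      have h1 := rne 3 3 0 (by decide); have h2 := rne 3 3 1 (by decide)
      have h3 := rne 3 3 2 (by decide); have h4 := rne 3 3 4 (by decide)
      have h5 := cne 3 0 3 (by decide); have h6 := cne 3 1 3 (by decide)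
      have h7 := cne 3 2 3 (by decide); have h8 := cne 3 4 3 (by decide)
      omega
    funext i j
    fin_cases i <;> fin_cases j <;>
      simp_all [Matrix.cons_val_zero, Matrix.cons_val_one]
  · rintro rfl
    refine ⟨⟨?_, ?_, ?_⟩, ?_⟩
    · decide
    · decide
    · decide
    · intro i j c h
      fin_cases i <;> fin_cases j <;>
        first
          | (rw [show P5 _ _ = (none : Option ℕ) from by decide] at h
             exact Option.noConfusion h)
          | (simp [P5] at h ⊢ <;> omega)
end
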